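/- Let G = (V,E) be a finite simple undirected graph and F ∈ ℕ₊. On a probability space, let X : V → ℝ^F be a random matrix whose entries X_{k,i} are jointly independent and identically distributed with mean 0 and variance 1/F. For each vertex w define h_w = Σ_{k ∈ N(w)} X_k. Then for every pair of vertices (u, v) ∈ V × V, E[h_u · h_v] = CN(u,v), the number of common neighbors of u and v. -/

import Mathlib

/-!
Expanding the product, `E[h_u · h_v] = ∑ᵢ ∑_{k ∈ N(u), l ∈ N(v)} E[X_{k,i} X_{l,i}]`.
Independence and mean zero kill every term with `k ≠ l`, and each diagonal term
`k = l ∈ N(u) ∩ N(v)` contributes the variance `1/F`, once for each of the `F` coordinates.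
-/

open MeasureTheory ProbabilityTheory Finset

section
variable {Ω ι : Type*} [MeasurableSpace Ω] {μ : Measure Ω}

lemma memLp_two_of_integral_sq_ne_zero {f : Ω → ℝ} (hf : AEStronglyMeasurable f μ)
    (h : ∫ ω, f ω ^ 2 ∂μ ≠ 0) : MemLp f 2 μ :=
  (memLp_two_iff_integrable_sq hf).2 (Integrable.of_integral_ne_zero h)

lemma integral_mul_eq_zero_of_indepFun {X Y : Ω → ℝ} (hXY : IndepFun X Y μ)
    (hX : AEStronglyMeasurable X μ) (hY : AEStronglyMeasurable Y μ)
    (hX0 : ∫ ω, X ω ∂μ = 0) :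
    ∫ ω, X ω * Y ω ∂μ = 0 := by
  rw [hXY.integral_fun_mul_eq_mul_integral hX hY, hX0, zero_mul]

lemma integral_sum_mul_sum_eq_sum_inter [DecidableEq ι] {Y : ι → Ω → ℝ}
    (hY : ∀ k, MemLp (Y k) 2 μ) (horth : Pairwise fun k l => ∫ ω, Y k ω * Y l ω ∂μ = 0)
    (s t : Finset ι) :
    ∫ ω, (∑ k ∈ s, Y k ω) * (∑ l ∈ t, Y l ω) ∂μ = ∑ k ∈ s ∩ t, ∫ ω, Y k ω ^ 2 ∂μ := by
  have hint : ∀ k l, Integrable (fun ω => Y k ω * Y l ω) μ := fun k l =>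
    (hY k).integrable_mul (hY l)
  have hdiag : ∀ k l,
      ∫ ω, Y k ω * Y l ω ∂μ = if k = l then ∫ ω, Y k ω ^ 2 ∂μ else 0 := by
    intro k l
    split_ifs with hkl
    · simp [hkl, sq]
    · exact horth hkl
  simp_rw [sum_mul_sum]
  rw [integral_finsetSum _ fun k _ => integrable_finsetSum _ fun l _ => hint k l]
  simp_rw [integral_finsetSum _ fun l _ => hint _ l, hdiag, sum_ite_eq, sum_ite_mem]

end

theorem message_passing_expected_inner_product_eq_commonNeighbors_general
    {V : Type*} [Fintype V] [DecidableEq V]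
    (G : SimpleGraph V) [DecidableRel G.Adj]
    {Ω : Type*} [MeasureSpace Ω] [IsProbabilityMeasure (ℙ : Measure Ω)]
    (F : ℕ) (hF : 0 < F)
    (X : V → Fin F → Ω → ℝ)
    (hXmeas : ∀ k i, Measurable (X k i))
    -- the entries of `X` are jointly independent
    (hXindep : iIndepFun
      (fun (p : V × Fin F) ω => X p.1 p.2 ω) ℙ)
    -- with mean `0` and variance `1/F`
    (hXmean : ∀ k i, ∫ ω, X k i ω = 0)
    (hXvar : ∀ k i, ∫ ω, (X k i ω) ^ 2 = 1 / F)
    -- `h_w = ∑_{k ∈ N(w)} X_k`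
    (h : V → Ω → Fin F → ℝ)
    (hh : ∀ w ω i, h w ω i = ∑ k ∈ G.neighborFinset w, X k i ω)
    (u v : V) :
    ∫ ω, ∑ i : Fin F, h u ω i * h v ω i =
      ((G.neighborFinset u ∩ G.neighborFinset v).card : ℝ) := by
  have hL2 : ∀ k i, MemLp (X k i) 2 ℙ := fun k i =>
    memLp_two_of_integral_sq_ne_zero (hXmeas k i).aestronglyMeasurable
      (by rw [hXvar]; positivity)
  have horth : ∀ i, Pairwise fun k l => ∫ ω, X k i ω * X l i ω = 0 := fun i k l hkl =>
    integral_mul_eq_zero_of_indepFun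
      (hXindep.indepFun (i := (k, i)) (j := (l, i)) (by simp [hkl]))
      (hXmeas k i).aestronglyMeasurable (hXmeas l i).aestronglyMeasurable (hXmean k i)
  have hcoord : ∀ i,
      ∫ ω, (∑ k ∈ G.neighborFinset u, X k i ω) * (∑ l ∈ G.neighborFinset v, X l i ω)
        = (#(G.neighborFinset u ∩ G.neighborFinset v) : ℝ) / F := fun i => by
    rw [integral_sum_mul_sum_eq_sum_inter (hL2 · i) (horth i),
      sum_congr rfl fun k _ => hXvar k i, sum_const, nsmul_eq_mul, mul_one_div]
  simp_rw [hh]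
  rw [integral_finsetSum _ fun i _ => by
    exact (memLp_finsetSum _ fun k _ => hL2 k i).integrable_mul
      (memLp_finsetSum _ fun l _ => hL2 l i)]
  simp_rw [hcoord, sum_const, card_univ, Fintype.card_fin, nsmul_eq_mul]
  field_simp

/-- unbiased common-neighbor estimator, expectation.  If the entries of the
random vectors `X_k ∈ ℝ^F` are i.i.d. with mean `0` and variance `1/F`, and
`h_w = ∑_{k ∈ N(w)} X_k`, then for every pair of vertices `(u, v)`,
`E[h_u ⬝ h_v] = CN(u,v)`, the number of common neighbors of `u` and `v`. -/
theorem message_passing_expected_inner_product_eq_commonNeighbors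
    {V : Type*} [Fintype V] [DecidableEq V]
    (G : SimpleGraph V) [DecidableRel G.Adj]
    {Ω : Type*} [MeasureSpace Ω] [IsProbabilityMeasure (ℙ : Measure Ω)]
    (F : ℕ) (hF : 0 < F)
    (X : V → Fin F → Ω → ℝ)
    (hXmeas : ∀ k i, Measurable (X k i))
    -- the entries of `X` are jointly independent
    (hXindep : iIndepFun
      (fun (p : V × Fin F) ω => X p.1 p.2 ω) ℙ)
    -- and identically distributed
    (hXid : ∀ (p q : V × Fin F), IdentDistrib (X p.1 p.2) (X q.1 q.2) ℙ ℙ)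
    -- with mean `0` and variance `1/F`
    (hXmean : ∀ k i, ∫ ω, X k i ω = 0)
    (hXvar : ∀ k i, ∫ ω, (X k i ω) ^ 2 = 1 / F)
    -- `h_w = ∑_{k ∈ N(w)} X_k`
    (h : V → Ω → Fin F → ℝ)
    (hh : ∀ w ω i, h w ω i = ∑ k ∈ G.neighborFinset w, X k i ω)
    (u v : V) :
    ∫ ω, ∑ i : Fin F, h u ω i * h v ω i =
      ((G.neighborFinset u ∩ G.neighborFinset v).card : ℝ) :=
  message_passing_expected_inner_product_eq_commonNeighbors_general G F hF X hXmeas hXindep hXmean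
    hXvar h hh u v
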